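/- arXiv:2408.15723 — 2 statements merged into one kernel-verified Lean document; each statement's English description precedes it below -/
import Mathlib

section
/- With β(a) = [ψ(3/2−a) − ψ(1−a)]/B(a,1−a), one has lim_{a→1⁻} (1 − β(a))/(1 − a) = log 4. -/
open Real Filter Set

noncomputable def poch (x : ℝ) (n : ℕ) : ℝ := (ascPochhammer ℝ n).eval x

noncomputable def hyp (a b c x : ℝ) : ℝ :=
  ∑' n : ℕ, poch a n * poch b n / (poch c n * n.factorial) * x ^ n

noncomputable def digamma (x : ℝ) : ℝ := deriv Real.Gamma x / Real.Gamma x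

noncomputable def Beta (x y : ℝ) : ℝ := Real.Gamma x * Real.Gamma y / Real.Gamma (x + y)

noncomputable def betaFn (a : ℝ) : ℝ :=
  (digamma (3 / 2 - a) - digamma (1 - a)) / Beta a (1 - a)

lemma Gamma_ne_zero_of_pos {x : ℝ} (hx : 0 < x) : Real.Gamma x ≠ 0 :=
  (Real.Gamma_pos_of_pos hx).ne'

lemma diffAt_Gamma_of_pos {x : ℝ} (hx : 0 < x) : DifferentiableAt ℝ Real.Gamma x :=
  Real.differentiableAt_Gamma (fun m => by
    have : (0:ℝ) ≤ m := m.cast_nonneg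
    intro h; rw [h] at hx; linarith)

lemma analyticOnNhd_Gamma : AnalyticOnNhd ℝ Real.Gamma (Set.Ioi (0:ℝ)) := by
  have hC : AnalyticOnNhd ℂ Complex.Gamma {z : ℂ | 0 < z.re} := by
    refine DifferentiableOn.analyticOnNhd (fun z hz => ?_)
      (isOpen_lt continuous_const Complex.continuous_re)
    refine (Complex.differentiableAt_Gamma z (fun m => ?_)).differentiableWithinAt
    intro h
    rw [h] at hz
    simp only [Set.mem_setOf_eq, Complex.neg_re, Complex.natCast_re] at hz
    have : (0:ℝ) ≤ (m:ℝ) := m.cast_nonneg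
    linarith
  intro x hx
  have hA : AnalyticAt ℂ Complex.Gamma (x:ℂ) := hC _ (by simpa using hx)
  have h1 : AnalyticAt ℝ (fun t : ℝ => (Complex.Gamma (t:ℂ)).re) x :=
    (Complex.reCLM.analyticAt _).comp ((hA.restrictScalars).comp (Complex.ofRealCLM.analyticAt x))
  refine h1.congr (Filter.Eventually.of_forall fun t => ?_)
  show (Complex.Gamma (t:ℂ)).re = Real.Gamma t
  rw [Complex.Gamma_ofReal]
  simp

lemma contAt_deriv_Gamma {x : ℝ} (hx : 0 < x) : ContinuousAt (deriv Real.Gamma) x :=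
  ((analyticOnNhd_Gamma.deriv) x hx).continuousAt

lemma contAt_digamma {x : ℝ} (hx : 0 < x) : ContinuousAt digamma x :=
  (contAt_deriv_Gamma hx).div (diffAt_Gamma_of_pos hx).continuousAt (Gamma_ne_zero_of_pos hx)

lemma digamma_one : digamma 1 = -Real.eulerMascheroniConstant := by
  rw [digamma, Real.hasDerivAt_Gamma_one.deriv, Real.Gamma_one, div_one]

lemma digamma_half : digamma (1/2) = -(Real.eulerMascheroniConstant + 2 * Real.log 2) := by
  rw [digamma, Real.hasDerivAt_Gamma_one_half.deriv, Real.Gamma_one_half_eq]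
  rw [neg_mul, neg_div, mul_comm, mul_div_assoc, div_self (by positivity : Real.sqrt π ≠ 0),
    mul_one]

lemma deriv_Gamma_add_one {x : ℝ} (hx : 0 < x) :
    deriv Real.Gamma (x + 1) = Real.Gamma x + x * deriv Real.Gamma x := by
  have h1 : HasDerivAt Real.Gamma (deriv Real.Gamma x) x := (diffAt_Gamma_of_pos hx).hasDerivAt
  have h2 : HasDerivAt (fun y => Real.Gamma (y + 1)) (deriv Real.Gamma (x + 1)) x :=
    HasDerivAt.comp_add_const x 1 (diffAt_Gamma_of_pos (by linarith : (0:ℝ) < x + 1)).hasDerivAt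
  have h3 : (fun y => Real.Gamma (y + 1)) =ᶠ[nhds x] fun y => y * Real.Gamma y := by
    filter_upwards [eventually_gt_nhds hx] with y hy
    rw [Real.Gamma_add_one hy.ne']
  have h4 : HasDerivAt (fun y => y * Real.Gamma y)
      (1 * Real.Gamma x + x * deriv Real.Gamma x) x := (hasDerivAt_id x).mul h1
  have h5 := h2.congr_of_eventuallyEq h3.symm
  have := h5.unique h4
  rw [this, one_mul]

lemma digamma_add_one {x : ℝ} (hx : 0 < x) : digamma (x + 1) = 1 / x + digamma x := by
  have hG := Gamma_ne_zero_of_pos hx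
  rw [digamma, digamma, deriv_Gamma_add_one hx, Real.Gamma_add_one hx.ne']
  field_simp

theorem stmt7 :
    Filter.Tendsto (fun a : ℝ => (1 - betaFn a) / (1 - a))
      (nhdsWithin 1 (Set.Iio 1)) (nhds (Real.log 4)) := by
  set γ := Real.eulerMascheroniConstant
  -- G a = Γ a * Γ (2 - a)
  set G : ℝ → ℝ := fun a => Real.Gamma a * Real.Gamma (2 - a) with hGdef
  have hG1 : G 1 = 1 := by
    show Real.Gamma 1 * Real.Gamma (2 - 1) = 1
    norm_num [Real.Gamma_one]
  -- G has derivative 0 at 1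
  have hGd : HasDerivAt G 0 1 := by
    have h1 : HasDerivAt Real.Gamma (-γ) 1 := Real.hasDerivAt_Gamma_one
    have h1' : HasDerivAt Real.Gamma (-γ) (2 - (1:ℝ)) := by
      rw [show (2:ℝ) - 1 = 1 by norm_num]; exact h1
    have h2 : HasDerivAt (fun a : ℝ => Real.Gamma (2 - a)) γ 1 := by
      have := h1'.comp (1:ℝ) ((hasDerivAt_id (1:ℝ)).const_sub 2)
      exact this.congr_deriv (by ring)
    have h3 := h1.mul h2
    have h4 : -γ * Real.Gamma (2 - 1) + Real.Gamma 1 * γ = 0 := by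
      norm_num [Real.Gamma_one]
    exact h3.congr_deriv h4
  -- limit T1 : (G a - 1)/(1 - a) → 0 on 𝓝[<] 1
  have hT1 : Tendsto (fun a : ℝ => (G a - 1) / (1 - a)) (nhdsWithin 1 (Set.Iio 1)) (nhds 0) := by
    have hs := hasDerivAt_iff_tendsto_slope.mp hGd
    have hs2 : Tendsto (slope G 1) (nhdsWithin 1 (Set.Iio 1)) (nhds 0) :=
      hs.mono_left (nhdsWithin_mono _ (fun a ha => ha.ne))
    have : Tendsto (fun a : ℝ => -(slope G 1 a)) (nhdsWithin 1 (Set.Iio 1)) (nhds 0) := by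
      simpa using hs2.neg
    refine this.congr (fun a => ?_)
    rw [slope_def_field, hG1, show (1:ℝ) - a = -(a - 1) by ring, div_neg]
  -- limit T2 : digamma (3/2 - a) - digamma (2 - a) → -log 4
  have hT2 : Tendsto (fun a : ℝ => digamma (3/2 - a) - digamma (2 - a))
      (nhdsWithin 1 (Set.Iio 1)) (nhds (-Real.log 4)) := by
    have hc1 : ContinuousAt (fun a : ℝ => digamma (3/2 - a)) 1 := by
      have : ContinuousAt digamma ((3:ℝ)/2 - 1) := by
        norm_num
        exact contAt_digamma (by norm_num)
      exact this.comp (by fun_prop)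
    have hc2 : ContinuousAt (fun a : ℝ => digamma (2 - a)) 1 := by
      have : ContinuousAt digamma ((2:ℝ) - 1) := by
        norm_num
        exact contAt_digamma (by norm_num)
      exact this.comp (by fun_prop)
    have h : Tendsto (fun a : ℝ => digamma (3/2 - a) - digamma (2 - a)) (nhdsWithin 1 (Set.Iio 1))
        (nhds (digamma (3/2 - 1) - digamma (2 - 1))) :=
      Filter.Tendsto.mono_left (hc1.sub hc2) nhdsWithin_le_nhds
    have hval : digamma (3/2 - 1) - digamma (2 - 1) = -Real.log 4 := by
      norm_num [digamma_half, digamma_one]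
      rw [show (4:ℝ) = 2^2 by norm_num, Real.log_pow]
      push_cast
      ring
    rwa [hval] at h
  -- limit T3 : G a → 1
  have hT3 : Tendsto G (nhdsWithin 1 (Set.Iio 1)) (nhds 1) := by
    have := hGd.differentiableAt.continuousAt.tendsto.mono_left
      (nhdsWithin_le_nhds (s := Set.Iio (1:ℝ)))
    rwa [hG1] at this
  -- combined limit
  have hmain : Tendsto (fun a : ℝ =>
      ((G a - 1) / (1 - a) - (digamma (3/2 - a) - digamma (2 - a))) / G a)
      (nhdsWithin 1 (Set.Iio 1)) (nhds (Real.log 4)) := by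
    have := (hT1.sub hT2).div hT3 one_ne_zero
    convert this using 2 <;> simp
  refine hmain.congr' ?_
  -- eventual equality on 𝓝[<] 1 for a ∈ (0,1)
  have hev : ∀ᶠ a in nhdsWithin (1:ℝ) (Set.Iio 1), a ∈ Set.Ioo (0:ℝ) 1 := by
    filter_upwards [Ioo_mem_nhdsLT_of_mem (by norm_num : (1:ℝ) ∈ Set.Ioc 0 1)] with a ha
    exact ⟨ha.1, ha.2⟩
  filter_upwards [hev] with a ha
  obtain ⟨ha0, ha1⟩ := ha
  have hε : (0:ℝ) < 1 - a := by linarith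
  have hεne : (1:ℝ) - a ≠ 0 := hε.ne'
  have hGa : Real.Gamma a ≠ 0 := Gamma_ne_zero_of_pos ha0
  have hG2a : Real.Gamma (2 - a) ≠ 0 := Gamma_ne_zero_of_pos (by linarith)
  have hGprod : G a ≠ 0 := mul_ne_zero hGa hG2a
  -- rewrite betaFn
  have hψ : digamma (1 - a) = digamma (2 - a) - 1 / (1 - a) := by
    have := digamma_add_one hε
    rw [show (1:ℝ) - a + 1 = 2 - a by ring] at this
    rw [this]; ring
  have hΓ : Real.Gamma (1 - a) = Real.Gamma (2 - a) / (1 - a) := by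
    have := Real.Gamma_add_one hεne
    rw [show (1:ℝ) - a + 1 = 2 - a by ring] at this
    rw [this]
    field_simp
  have hBeta : Beta a (1 - a) = G a / (1 - a) := by
    rw [Beta, show a + (1 - a) = (1:ℝ) by ring, Real.Gamma_one, div_one, hΓ, hGdef]
    field_simp
  rw [betaFn, hψ, hBeta]
  field_simp
  ring
end

section
/- Let a, b₁, b₂ > 0 with b₁ < b₂, c₁ = a+b₁, c₂ = a+b₂, and define h₉(r) = ₂F₁(a, b₁; c₁+1; r)/₂F₁(a, b₂; c₂+1; r) for r ∈ [0,1]. Then h₉ is strictly decreasing on [0,1], with h₉(0) = 1 and h₉(1) = Γ(b₂+1)Γ(c₁+1)/(Γ(b₁+1)Γ(c₂+1)). -/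
open Real Filter Set

open MeasureTheory Topology

lemma poch_zero (x : ℝ) : poch x 0 = 1 := by simp [poch]

lemma poch_succ (x : ℝ) (n : ℕ) : poch x (n + 1) = poch x n * (x + n) := by
  simp [poch, ascPochhammer_succ_eval]

lemma poch_pos {x : ℝ} (hx : 0 < x) (n : ℕ) : 0 < poch x n := by
  induction n with
  | zero => simp [poch_zero]
  | succ n ih => rw [poch_succ]; positivity

section Binomial

variable {a : ℝ}

/-- the bound series for derivatives -/
lemma summable_bin_aux (ha : 0 < a) {ρ : ℝ} (h0 : 0 < ρ) (h1 : ρ < 1) :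
    Summable (fun n : ℕ => poch a n / n.factorial * (n * ρ ^ (n - 1))) := by
  apply summable_of_ratio_test_tendsto_lt_one h1
  · filter_upwards [eventually_ge_atTop 1] with n hn
    have h2 : (0:ℝ) < n := by exact_mod_cast hn
    have := poch_pos ha n
    have := Nat.factorial_pos n
    positivity
  · have ht : Tendsto (fun n : ℕ => ρ * (1 + a / n)) atTop (𝓝 (ρ * (1 + 0))) :=
      tendsto_const_nhds.mul (tendsto_const_nhds.add (tendsto_const_div_atTop_nhds_zero_nat a))
    rw [add_zero, mul_one] at ht
    apply Tendsto.congr' _ ht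
    filter_upwards [eventually_ge_atTop 1] with n hn
    have h2 : (0:ℝ) < n := by exact_mod_cast hn
    have hp := poch_pos ha n
    have hf : (0:ℝ) < n.factorial := by exact_mod_cast Nat.factorial_pos n
    have hρn : ρ ^ n = ρ ^ (n - 1) * ρ := by
      rw [← pow_succ]; congr 1; omega
    have hp1 := poch_pos ha (n+1)
    have hf1 : (0:ℝ) < (n+1).factorial := by exact_mod_cast Nat.factorial_pos (n+1)
    have hfs : ((n+1).factorial : ℝ) = (n+1) * n.factorial := by
      rw [Nat.factorial_succ]; push_cast; ring
    rw [Real.norm_eq_abs, Real.norm_eq_abs, abs_of_pos, abs_of_pos]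
    rotate_left
    · positivity
    · simp only [Nat.add_sub_cancel]
      positivity
    simp only [Nat.add_sub_cancel]
    rw [poch_succ, hρn, hfs]
    push_cast
    field_simp
    ring

lemma norm_deriv_term_le (ha : 0 < a) {ρ : ℝ} (n : ℕ) {y : ℝ} (hy : |y| ≤ ρ) :
    ‖poch a n / n.factorial * (n * y ^ (n - 1))‖ ≤ poch a n / n.factorial * (n * ρ ^ (n - 1)) := by
  have hp := (poch_pos ha n).le
  have hf : (0:ℝ) ≤ n.factorial := by positivity
  have hyn : |y| ^ (n-1) ≤ ρ ^ (n-1) := pow_le_pow_left₀ (abs_nonneg y) hy _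
  calc ‖poch a n / n.factorial * (n * y ^ (n - 1))‖
      = poch a n / n.factorial * (n * |y| ^ (n-1)) := by
        rw [Real.norm_eq_abs, abs_mul, abs_mul, abs_pow,
          abs_of_nonneg (by positivity : (0:ℝ) ≤ poch a n / n.factorial), Nat.abs_cast]
    _ ≤ poch a n / n.factorial * (n * ρ ^ (n-1)) := by
        have h1 : (0:ℝ) ≤ poch a n / n.factorial := by positivity
        have h2 : (0:ℝ) ≤ (n:ℝ) := by positivity
        exact mul_le_mul_of_nonneg_left (mul_le_mul_of_nonneg_left hyn h2) h1

lemma summable_zero_pt (a : ℝ) : Summable (fun n : ℕ => poch a n / n.factorial * (0:ℝ) ^ n) := by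
  apply summable_of_ne_finset_zero (s := {0})
  intro n hn
  have : n ≠ 0 := by simpa using hn
  simp [zero_pow this]

lemma bin_summable (ha : 0 < a) {x : ℝ} (hx : |x| < 1) :
    Summable (fun n : ℕ => poch a n / n.factorial * x ^ n) := by
  set ρ : ℝ := (1 + |x|) / 2 with hρ
  have h0 : 0 < ρ := by positivity
  have h1 : ρ < 1 := by rw [hρ]; linarith
  have hxρ : |x| < ρ := by rw [hρ]; linarith
  apply summable_of_summable_hasDerivAt_of_isPreconnected (summable_bin_aux ha h0 h1)
    (isOpen_Ioo (a := -ρ) (b := ρ)) (convex_Ioo _ _).isPreconnected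
    (g' := fun n y => poch a n / n.factorial * (n * y ^ (n - 1)))
    (fun n y _ => (hasDerivAt_pow n y).const_mul (poch a n / n.factorial))
    (fun n y hy => norm_deriv_term_le ha n (abs_le.2 ⟨(hy.1).le, hy.2.le⟩))
    (y₀ := 0) (by rw [mem_Ioo]; constructor <;> linarith)
    (summable_zero_pt a)
  rw [mem_Ioo]; exact ⟨neg_lt_of_abs_lt hxρ, lt_of_abs_lt hxρ⟩

lemma bin_summable_deriv (ha : 0 < a) {x : ℝ} (hx : |x| < 1) :
    Summable (fun n : ℕ => poch a n / n.factorial * (n * x ^ (n - 1))) := by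
  set ρ : ℝ := (1 + |x|) / 2 with hρ
  have h0 : 0 < ρ := by positivity
  have h1 : ρ < 1 := by rw [hρ]; linarith
  have hxρ : |x| ≤ ρ := by rw [hρ]; linarith
  exact (summable_bin_aux ha h0 h1).of_norm_bounded (fun n => norm_deriv_term_le ha n hxρ)

lemma bin_hasDerivAt (ha : 0 < a) {x : ℝ} (hx : |x| < 1) :
    HasDerivAt (fun y : ℝ => ∑' n : ℕ, poch a n / n.factorial * y ^ n)
      (∑' n : ℕ, poch a n / n.factorial * (n * x ^ (n - 1))) x := by
  set ρ : ℝ := (1 + |x|) / 2 with hρ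
  have h0 : 0 < ρ := by positivity
  have h1 : ρ < 1 := by rw [hρ]; linarith
  have hxρ : |x| < ρ := by rw [hρ]; linarith
  apply hasDerivAt_tsum_of_isPreconnected (summable_bin_aux ha h0 h1)
    (isOpen_Ioo (a := -ρ) (b := ρ)) (convex_Ioo _ _).isPreconnected
    (fun n y _ => (hasDerivAt_pow n y).const_mul (poch a n / n.factorial))
    (fun n y hy => norm_deriv_term_le ha n (abs_le.2 ⟨(hy.1).le, hy.2.le⟩))
    (y₀ := 0) (by rw [mem_Ioo]; constructor <;> linarith)
    (summable_zero_pt a)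
  rw [mem_Ioo]; exact ⟨neg_lt_of_abs_lt hxρ, lt_of_abs_lt hxρ⟩

lemma bin_deriv_id (ha : 0 < a) {x : ℝ} (hx : |x| < 1) :
    (1 - x) * (∑' n : ℕ, poch a n / n.factorial * (n * x ^ (n - 1)))
      = a * ∑' n : ℕ, poch a n / n.factorial * x ^ n := by
  have SD := bin_summable_deriv ha hx
  have Sg := bin_summable ha hx
  set fD : ℕ → ℝ := fun n => poch a n / n.factorial * (n * x ^ (n - 1)) with hfD
  set fg : ℕ → ℝ := fun n => poch a n / n.factorial * x ^ n with hfg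
  have hptwise : ∀ m : ℕ, fD (m + 1) = a * fg m + fD m * x := by
    intro m
    have hfs : ((m+1).factorial : ℝ) = (m+1) * m.factorial := by
      rw [Nat.factorial_succ]; push_cast; ring
    have hf : (0:ℝ) < m.factorial := by exact_mod_cast Nat.factorial_pos m
    rcases Nat.eq_zero_or_pos m with hm | hm
    · subst hm
      simp [hfD, hfg, poch_succ, poch_zero]
    · have hxm' : (m:ℝ) * x ^ (m - 1) * x = m * x ^ m := by
        rw [mul_assoc, ← pow_succ]
        congr 2
        omega
      have hDm : fD m * x = poch a m / m.factorial * (m * x ^ m) := by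
        simp only [hfD]
        rw [← hxm']
        ring
      rw [hDm]
      simp only [hfD, hfg, Nat.add_sub_cancel, poch_succ, hfs]
      field_simp
      push_cast
      ring
  have S1 : Summable (fun m : ℕ => fD (m + 1)) := (summable_nat_add_iff 1).2 SD
  have h0 : fD 0 = 0 := by simp [hfD]
  have hshift : (∑' n, fD n) = 0 + ∑' m, fD (m + 1) := by
    rw [← h0]; exact SD.tsum_eq_zero_add
  have hsplit : (∑' m, fD (m + 1)) = a * (∑' m, fg m) + (∑' m, fD m) * x := by
    calc (∑' m, fD (m + 1)) = ∑' m, (a * fg m + fD m * x) := by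
          exact tsum_congr hptwise
      _ = (∑' m, a * fg m) + ∑' m, fD m * x :=
          Summable.tsum_add (Sg.mul_left a) (SD.mul_right x)
      _ = a * (∑' m, fg m) + (∑' m, fD m) * x := by rw [tsum_mul_left, tsum_mul_right]
  have hDsum : (∑' n, fD n) = a * (∑' m, fg m) + (∑' m, fD m) * x := by
    conv_lhs => rw [hshift, hsplit]
    ring
  linarith [hDsum]

lemma binomial_hasSum (ha : 0 < a) {s : ℝ} (h0 : 0 ≤ s) (h1 : s < 1) :
    HasSum (fun n : ℕ => poch a n / n.factorial * s ^ n) ((1 - s) ^ (-a) : ℝ) := by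
  have habs : |s| < 1 := abs_lt.2 ⟨by linarith, h1⟩
  set g : ℝ → ℝ := fun y => ∑' n : ℕ, poch a n / n.factorial * y ^ n with hg
  have hg0 : g 0 = 1 := by
    have h00 : g 0 = ∑' n : ℕ, poch a n / n.factorial * (0:ℝ) ^ n := rfl
    rw [h00, tsum_eq_single 0 (fun n hn => by simp [zero_pow hn])]
    simp [poch_zero]
  -- h is constant on [0, s]
  have hconst : ∀ y ∈ Icc 0 s, g y * (1 - y) ^ a = g 0 * (1 - 0) ^ a := by
    have hsub : Icc (0:ℝ) s ⊆ Ioo (-1 : ℝ) 1 := fun y hy =>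
      ⟨by linarith [hy.1], by linarith [hy.2]⟩
    have hderiv : ∀ y ∈ Icc (0:ℝ) s, HasDerivAt (fun z => g z * (1 - z) ^ a) 0 y := by
      intro y hy
      obtain ⟨hy1, hy2⟩ := hsub hy
      have hyabs : |y| < 1 := abs_lt.2 ⟨hy1, hy2⟩
      have h1y : (0:ℝ) < 1 - y := by linarith
      have hgd := bin_hasDerivAt ha hyabs
      have hrd : HasDerivAt (fun z : ℝ => (1 - z) ^ a) (-(a * (1 - y) ^ (a - 1))) y := by
        have h := (Real.hasDerivAt_rpow_const (x := 1 - y) (p := a) (Or.inl h1y.ne')).comp y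
          ((hasDerivAt_id y).const_sub 1)
        refine h.congr_deriv ?_
        ring
      have := hgd.mul hrd
      refine this.congr_deriv ?_
      have key := bin_deriv_id ha hyabs
      have hsplit : (1 - y) ^ a = (1 - y) ^ (a - 1) * (1 - y) := by
        rw [← Real.rpow_add_one h1y.ne' (a-1)]; ring_nf
      rw [hsplit]
      set D := ∑' n : ℕ, poch a n / n.factorial * (n * y ^ (n - 1))
      set G := ∑' n : ℕ, poch a n / n.factorial * y ^ n
      have hkey : (1 - y) * D = a * G := key
      linear_combination ((1 - y) ^ (a - 1)) * hkey
    have hcont : ContinuousOn (fun z => g z * (1 - z) ^ a) (Icc 0 s) := fun y hy =>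
      ((hderiv y hy).continuousAt).continuousWithinAt
    intro y hy
    exact constant_of_has_deriv_right_zero hcont
      (fun z hz => ((hderiv z (Ico_subset_Icc_self hz)).hasDerivWithinAt)) y hy
  have hval := hconst s (right_mem_Icc.2 h0)
  rw [hg0, sub_zero, Real.one_rpow, one_mul] at hval
  have h1s : (0:ℝ) < 1 - s := by linarith
  have hne : (1 - s : ℝ) ^ a ≠ 0 := (Real.rpow_pos_of_pos h1s a).ne'
  have hgs : g s = (1 - s) ^ (-a) := by
    rw [Real.rpow_neg h1s.le]
    field_simp at hval ⊢
    linarith [hval]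
  rw [← hgs]
  exact (bin_summable ha habs).hasSum

lemma Gamma_poch {x : ℝ} (hx : 0 < x) (n : ℕ) :
    Real.Gamma (x + n) = poch x n * Real.Gamma x := by
  induction n with
  | zero => simp [poch_zero]
  | succ n ih =>
    have hxn : (x + n : ℝ) ≠ 0 := by positivity
    have h : (x + (n + 1 : ℕ) : ℝ) = (x + n) + 1 := by push_cast; ring
    rw [h, Real.Gamma_add_one hxn, ih, poch_succ]; ring

lemma real_beta {u v : ℝ} (hu : 0 < u) (hv : 0 < v) :
    ∫ s in Ioo (0:ℝ) 1, s ^ (u - 1) * (1 - s) ^ (v - 1)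
      = Real.Gamma u * Real.Gamma v / Real.Gamma (u + v) := by
  have h1 : Complex.Gamma u * Complex.Gamma v
      = Complex.Gamma (u + v) * Complex.betaIntegral u v :=
    Complex.Gamma_mul_Gamma_eq_betaIntegral (by simpa using hu) (by simpa using hv)
  have h2 : Complex.betaIntegral u v
      = ((∫ s in (0:ℝ)..1, s ^ (u - 1) * (1 - s) ^ (v - 1)) : ℝ) := by
    rw [Complex.betaIntegral, ← intervalIntegral.integral_ofReal]
    apply intervalIntegral.integral_congr
    intro x hx
    rw [uIcc_of_le (by norm_num : (0:ℝ) ≤ 1)] at hx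
    have hx0 : (0:ℝ) ≤ x := hx.1
    have hx1 : (0:ℝ) ≤ 1 - x := by linarith [hx.2]
    simp only [Complex.ofReal_mul]
    rw [Complex.ofReal_cpow hx0, Complex.ofReal_cpow hx1]
    push_cast
    ring
  have hGuv : Complex.Gamma ((u:ℂ) + v) = ((Real.Gamma (u + v) : ℝ) : ℂ) := by
    rw [← Complex.ofReal_add, Complex.Gamma_ofReal]
  have h4 : Real.Gamma u * Real.Gamma v
      = Real.Gamma (u + v) * ∫ s in (0:ℝ)..1, s ^ (u - 1) * (1 - s) ^ (v - 1) := by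
    have h5 := h1
    rw [h2, hGuv, Complex.Gamma_ofReal, Complex.Gamma_ofReal] at h5
    exact_mod_cast h5
  have hG : Real.Gamma (u + v) ≠ 0 := (Real.Gamma_pos_of_pos (by linarith)).ne'
  rw [← integral_Ioc_eq_integral_Ioo, ← intervalIntegral.integral_of_le zero_le_one]
  field_simp
  linarith [h4]

section Gauss

variable {a b : ℝ}

lemma intF (ha : 0 < a) : IntegrableOn (fun s : ℝ => s ^ (a - 1)) (Ioo 0 1) volume := by
  have h := intervalIntegral.intervalIntegrable_rpow' (a := 0) (b := 1) (by linarith : (-1:ℝ) < a - 1)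
  rw [intervalIntegrable_iff_integrableOn_Ioc_of_le zero_le_one] at h
  exact h.mono_set Ioo_subset_Ioc_self

lemma intF_val (ha : 0 < a) : ∫ s in Ioo (0:ℝ) 1, s ^ (a - 1) = 1 / a := by
  rw [← integral_Ioc_eq_integral_Ioo, ← intervalIntegral.integral_of_le zero_le_one,
    integral_rpow (Or.inl (by linarith : (-1:ℝ) < a - 1))]
  rw [show a - 1 + 1 = a by ring, Real.one_rpow, Real.zero_rpow ha.ne']
  norm_num

lemma contOn_term (ha : 0 < a) (hb : 0 < b) (n : ℕ) :
    ContinuousOn (fun s : ℝ => s ^ (a - 1) * (1 - s) ^ b * (poch b n / n.factorial * s ^ n))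
      (Ioo 0 1) := by
  apply ContinuousOn.mul
  · apply ContinuousOn.mul
    · exact continuousOn_id.rpow_const (fun x hx => Or.inl (ne_of_gt hx.1))
    · exact (continuousOn_const.sub continuousOn_id).rpow_const
        (fun x hx => Or.inl (by intro h; have h' : 1 - x = 0 := h; nlinarith [hx.2, h']))
  · exact continuousOn_const.mul (continuousOn_pow n)

lemma int_term (ha : 0 < a) (hb : 0 < b) (n : ℕ) :
    IntegrableOn (fun s : ℝ => s ^ (a - 1) * (1 - s) ^ b * (poch b n / n.factorial * s ^ n))
      (Ioo 0 1) volume := by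
  have hc : (0:ℝ) ≤ poch b n / n.factorial := by
    have := (poch_pos hb n).le
    positivity
  apply Integrable.mono' (((intF ha).const_mul (poch b n / n.factorial)))
    ((contOn_term ha hb n).aestronglyMeasurable measurableSet_Ioo)
  apply ae_restrict_of_forall_mem measurableSet_Ioo
  intro s hs
  obtain ⟨hs0, hs1⟩ := hs
  have h1s : (0:ℝ) < 1 - s := by linarith
  have h2 : (1 - s) ^ b ≤ 1 := Real.rpow_le_one h1s.le (by linarith) hb.le
  have h3 : s ^ n ≤ 1 := pow_le_one₀ hs0.le hs1.le
  have h4 : (0:ℝ) < s ^ (a - 1) := Real.rpow_pos_of_pos hs0 _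
  have h5 : (0:ℝ) < (1 - s) ^ b := Real.rpow_pos_of_pos h1s _
  have h6 : (0:ℝ) ≤ s ^ n := pow_nonneg hs0.le n
  rw [Real.norm_eq_abs, abs_of_nonneg (by positivity)]
  calc s ^ (a - 1) * (1 - s) ^ b * (poch b n / n.factorial * s ^ n)
      ≤ s ^ (a - 1) * 1 * (poch b n / n.factorial * 1) := by
        apply mul_le_mul
        · exact mul_le_mul_of_nonneg_left h2 h4.le
        · exact mul_le_mul_of_nonneg_left h3 hc
        · positivity
        · positivity
    _ = poch b n / n.factorial * s ^ (a - 1) := by ring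

lemma term_integral (ha : 0 < a) (hb : 0 < b) (n : ℕ) :
    ∫ s in Ioo (0:ℝ) 1, s ^ (a - 1) * (1 - s) ^ b * (poch b n / n.factorial * s ^ n)
      = poch b n / n.factorial
        * (Real.Gamma (a + n) * Real.Gamma (b + 1) / Real.Gamma (a + n + (b + 1))) := by
  have key : ∫ s in Ioo (0:ℝ) 1, s ^ (a - 1) * (1 - s) ^ b * (poch b n / n.factorial * s ^ n)
      = ∫ s in Ioo (0:ℝ) 1, poch b n / n.factorial * (s ^ (a + n - 1) * (1 - s) ^ (b + 1 - 1)) := by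
    apply setIntegral_congr_fun measurableSet_Ioo
    intro s hs
    have hs0 := hs.1
    have hxn : s ^ (a - 1) * s ^ (n:ℕ) = s ^ (a + n - 1) := by
      rw [← Real.rpow_natCast s n, ← Real.rpow_add hs0]
      ring_nf
    dsimp only
    rw [show b + 1 - 1 = b by ring, ← hxn]
    ring
  rw [key, integral_const_mul, real_beta (by positivity) (by positivity)]

lemma partial_sum_eq (ha : 0 < a) (hb : 0 < b) (N : ℕ) :
    ∑ n ∈ Finset.range N, poch a n * poch b n / (poch (a + b + 1) n * n.factorial)
      = (Real.Gamma (a + b + 1) / (Real.Gamma a * Real.Gamma (b + 1)))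
        * ∫ s in Ioo (0:ℝ) 1,
            s ^ (a - 1) * (1 - s) ^ b * (∑ n ∈ Finset.range N, poch b n / n.factorial * s ^ n) := by
  have hsplit : ∫ s in Ioo (0:ℝ) 1,
        s ^ (a - 1) * (1 - s) ^ b * (∑ n ∈ Finset.range N, poch b n / n.factorial * s ^ n)
      = ∑ n ∈ Finset.range N,
          ∫ s in Ioo (0:ℝ) 1, s ^ (a - 1) * (1 - s) ^ b * (poch b n / n.factorial * s ^ n) := by
    rw [← integral_finset_sum _ (fun n _ => int_term ha hb n)]
    apply setIntegral_congr_fun measurableSet_Ioo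
    intro s _
    dsimp only
    rw [Finset.mul_sum]
  rw [hsplit, Finset.mul_sum]
  apply Finset.sum_congr rfl
  intro n _
  rw [term_integral ha hb n]
  have hGa := Real.Gamma_pos_of_pos ha
  have hGb1 := Real.Gamma_pos_of_pos (by linarith : (0:ℝ) < b + 1)
  have hGc := Real.Gamma_pos_of_pos (by linarith : (0:ℝ) < a + b + 1)
  have hpa : Real.Gamma (a + n) = poch a n * Real.Gamma a := Gamma_poch ha n
  have hpc : Real.Gamma (a + n + (b + 1)) = poch (a + b + 1) n * Real.Gamma (a + b + 1) := by
    rw [show a + n + (b + 1) = (a + b + 1) + n by ring]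
    exact Gamma_poch (by linarith) n
  have hpocha := poch_pos ha n
  have hpochb := poch_pos hb n
  have hpochc := poch_pos (show (0:ℝ) < a + b + 1 by linarith) n
  have hfac : (0:ℝ) < n.factorial := by exact_mod_cast Nat.factorial_pos n
  rw [hpa, hpc]
  field_simp

lemma gauss_hasSum (ha : 0 < a) (hb : 0 < b) :
    HasSum (fun n : ℕ => poch a n * poch b n / (poch (a + b + 1) n * n.factorial))
      (Real.Gamma (a + b + 1) / (Real.Gamma (a + 1) * Real.Gamma (b + 1))) := by
  set t : ℕ → ℝ := fun n => poch a n * poch b n / (poch (a + b + 1) n * n.factorial) with ht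
  set lam : ℝ := Real.Gamma (a + b + 1) / (Real.Gamma a * Real.Gamma (b + 1)) with hlam
  have hlam_pos : 0 < lam := by
    have := Real.Gamma_pos_of_pos ha
    have := Real.Gamma_pos_of_pos (show (0:ℝ) < b + 1 by linarith)
    have := Real.Gamma_pos_of_pos (show (0:ℝ) < a + b + 1 by linarith)
    positivity
  have ht_nonneg : ∀ n, 0 ≤ t n := by
    intro n
    have := (poch_pos ha n).le
    have := (poch_pos hb n).le
    have := (poch_pos (show (0:ℝ) < a + b + 1 by linarith) n).le
    have : (0:ℝ) < n.factorial := by exact_mod_cast Nat.factorial_pos n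
    have := poch_pos ha n
    have := poch_pos hb n
    have := poch_pos (show (0:ℝ) < a + b + 1 by linarith) n
    positivity
  -- integrands
  set fN : ℕ → ℝ → ℝ := fun N s =>
    s ^ (a - 1) * (1 - s) ^ b * (∑ n ∈ Finset.range N, poch b n / n.factorial * s ^ n) with hfN
  have hfN_int : ∀ N, IntegrableOn (fN N) (Ioo 0 1) volume := by
    intro N
    have : fN N = fun s => ∑ n ∈ Finset.range N,
        s ^ (a - 1) * (1 - s) ^ b * (poch b n / n.factorial * s ^ n) := by
      funext s
      rw [hfN]
      simp only
      rw [Finset.mul_sum]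
    rw [this]
    exact integrable_finset_sum _ (fun n _ => int_term ha hb n)
  have hbound : ∀ N, ∀ s ∈ Ioo (0:ℝ) 1, fN N s ≤ s ^ (a - 1) := by
    intro N s hs
    obtain ⟨hs0, hs1⟩ := hs
    have h1s : (0:ℝ) < 1 - s := by linarith
    have hsum := binomial_hasSum hb hs0.le hs1
    have hple : (∑ n ∈ Finset.range N, poch b n / n.factorial * s ^ n) ≤ (1 - s) ^ (-b) := by
      apply sum_le_hasSum _ _ hsum
      intro n _
      have := (poch_pos hb n).le
      have : (0:ℝ) < n.factorial := by exact_mod_cast Nat.factorial_pos n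
      have := (poch_pos hb n).le
      positivity
    have hc : (0:ℝ) < s ^ (a - 1) * (1 - s) ^ b := by
      have := Real.rpow_pos_of_pos hs0 (a - 1)
      have := Real.rpow_pos_of_pos h1s b
      positivity
    calc fN N s ≤ s ^ (a - 1) * (1 - s) ^ b * (1 - s) ^ (-b) :=
          mul_le_mul_of_nonneg_left hple hc.le
      _ = s ^ (a - 1) * ((1 - s) ^ (b + -b)) := by
          rw [Real.rpow_add h1s]; ring
      _ = s ^ (a - 1) := by
          rw [add_neg_cancel, Real.rpow_zero, mul_one]
  have hpartial := partial_sum_eq ha hb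
  -- summability
  have hsummable : Summable t := by
    apply summable_of_sum_range_le ht_nonneg
    intro N
    rw [hpartial N]
    have hle : ∫ s in Ioo (0:ℝ) 1, fN N s ≤ ∫ s in Ioo (0:ℝ) 1, s ^ (a - 1) :=
      setIntegral_mono_on (hfN_int N) (intF ha) measurableSet_Ioo (hbound N)
    calc lam * ∫ s in Ioo (0:ℝ) 1, fN N s ≤ lam * ∫ s in Ioo (0:ℝ) 1, s ^ (a - 1) :=
          mul_le_mul_of_nonneg_left hle hlam_pos.le
      _ = lam * (1 / a) := by rw [intF_val ha]
  -- MCT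
  have hmct : Tendsto (fun N => ∫ s in Ioo (0:ℝ) 1, fN N s) atTop
      (𝓝 (∫ s in Ioo (0:ℝ) 1, s ^ (a - 1))) := by
    apply integral_tendsto_of_tendsto_of_monotone hfN_int (intF ha)
    · apply ae_restrict_of_forall_mem measurableSet_Ioo
      intro s hs
      apply monotone_nat_of_le_succ
      intro N
      have h1s : (0:ℝ) < 1 - s := by linarith [hs.2]
      have hc : (0:ℝ) ≤ s ^ (a - 1) * (1 - s) ^ b := by
        have := Real.rpow_pos_of_pos hs.1 (a - 1)
        have := Real.rpow_pos_of_pos h1s b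
        positivity
      apply mul_le_mul_of_nonneg_left _ hc
      rw [Finset.sum_range_succ]
      have := (poch_pos hb N).le
      have hfc : (0:ℝ) < N.factorial := by exact_mod_cast Nat.factorial_pos N
      have := pow_nonneg hs.1.le N
      nlinarith [pow_nonneg hs.1.le N, (poch_pos hb N).le,
        div_nonneg (poch_pos hb N).le hfc.le]
    · apply ae_restrict_of_forall_mem measurableSet_Ioo
      intro s hs
      obtain ⟨hs0, hs1⟩ := hs
      have h1s : (0:ℝ) < 1 - s := by linarith
      have hsum := (binomial_hasSum hb hs0.le hs1).tendsto_sum_nat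
      have := hsum.const_mul (s ^ (a - 1) * (1 - s) ^ b)
      have heq : s ^ (a - 1) * (1 - s) ^ b * (1 - s) ^ (-b) = s ^ (a - 1) := by
        rw [mul_assoc, ← Real.rpow_add h1s, add_neg_cancel, Real.rpow_zero, mul_one]
      rw [heq] at this
      exact this
  -- conclude
  have htendsto : Tendsto (fun N => ∑ n ∈ Finset.range N, t n) atTop (𝓝 (lam * (1 / a))) := by
    have := hmct.const_mul lam
    rw [intF_val ha] at this
    apply Tendsto.congr _ this
    intro N
    rw [hpartial N]
  have h1 := hsummable.hasSum.tendsto_sum_nat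
  have huniq := tendsto_nhds_unique h1 htendsto
  have hfinal : lam * (1 / a) = Real.Gamma (a + b + 1) / (Real.Gamma (a + 1) * Real.Gamma (b + 1)) := by
    rw [hlam, Real.Gamma_add_one ha.ne']
    have := (Real.Gamma_pos_of_pos ha).ne'
    have := (Real.Gamma_pos_of_pos (show (0:ℝ) < b + 1 by linarith)).ne'
    field_simp
    try ring
    try tauto
  rw [← hfinal, ← huniq]
  exact hsummable.hasSum

end Gauss

noncomputable def hypTerm (a b : ℝ) (n : ℕ) : ℝ :=
  poch a n * poch b n / (poch (a + b + 1) n * n.factorial)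

lemma hypTerm_pos {a b : ℝ} (ha : 0 < a) (hb : 0 < b) (n : ℕ) : 0 < hypTerm a b n := by
  have h1 := poch_pos ha n
  have h2 := poch_pos hb n
  have h3 := poch_pos (show (0:ℝ) < a + b + 1 by linarith) n
  have h4 : (0:ℝ) < n.factorial := by exact_mod_cast Nat.factorial_pos n
  exact div_pos (by positivity) (by positivity)

lemma hypTerm_zero (a b : ℝ) : hypTerm a b 0 = 1 := by
  simp [hypTerm, poch_zero]

lemma hypTerm_succ {a b : ℝ} (ha : 0 < a) (hb : 0 < b) (n : ℕ) :
    hypTerm a b (n + 1) = hypTerm a b n * ((a + n) * (b + n) / ((a + b + 1 + n) * (n + 1))) := by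
  have hc : (0:ℝ) < a + b + 1 := by linarith
  have h1 := (poch_pos ha n).ne'
  have h2 := (poch_pos hb n).ne'
  have h3 := (poch_pos hc n).ne'
  have h4 : ((n.factorial : ℕ) : ℝ) ≠ 0 := by
    exact_mod_cast (Nat.factorial_pos n).ne'
  have h5 : (n:ℝ) + 1 ≠ 0 := by positivity
  have h6 : a + b + 1 + n ≠ 0 := by
    have : (0:ℝ) ≤ n := Nat.cast_nonneg n
    intro h; linarith
  rw [hypTerm, hypTerm, poch_succ, poch_succ, poch_succ, Nat.factorial_succ]
  push_cast
  field_simp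

lemma hyp_eq_tsum (a b c x : ℝ) :
    hyp a b c x = ∑' n : ℕ, poch a n * poch b n / (poch c n * n.factorial) * x ^ n := rfl

lemma hyp_zero_val (a b c : ℝ) : hyp a b c 0 = 1 := by
  rw [hyp_eq_tsum, tsum_eq_single 0 (fun n hn => by simp [zero_pow hn])]
  simp [poch_zero]

section Mono

variable {a b₁ b₂ : ℝ}

lemma ratio_lt (ha : 0 < a) (hb₁ : 0 < b₁) (h12 : b₁ < b₂) (k : ℕ) :
    (a + k) * (b₁ + k) / ((a + b₁ + 1 + k) * (k + 1))
      < (a + k) * (b₂ + k) / ((a + b₂ + 1 + k) * (k + 1)) := by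
  have hk : (0:ℝ) ≤ k := Nat.cast_nonneg k
  have hd1 : (0:ℝ) < (a + b₁ + 1 + k) * (k + 1) := by nlinarith
  have hd2 : (0:ℝ) < (a + b₂ + 1 + k) * (k + 1) := by nlinarith
  rw [div_lt_div_iff₀ hd1 hd2]
  have hkey : (b₁ + k) * (a + b₂ + 1 + k) < (b₂ + k) * (a + b₁ + 1 + k) := by nlinarith
  nlinarith [mul_pos (show (0:ℝ) < a + k by positivity) (show (0:ℝ) < (k:ℝ) + 1 by positivity)]

lemma cross_le (ha : 0 < a) (hb₁ : 0 < b₁) (h12 : b₁ < b₂) {m n : ℕ} (hmn : m ≤ n) :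
    hypTerm a b₁ n * hypTerm a b₂ m ≤ hypTerm a b₁ m * hypTerm a b₂ n := by
  have hb₂ : 0 < b₂ := hb₁.trans h12
  induction n, hmn using Nat.le_induction with
  | base => ring_nf; exact le_rfl
  | succ k hmk ih =>
    have hAk := hypTerm_pos ha hb₁ k
    have hBk := hypTerm_pos ha hb₂ k
    have hAm := hypTerm_pos ha hb₁ m
    have hBm := hypTerm_pos ha hb₂ m
    have hk : (0:ℝ) ≤ k := Nat.cast_nonneg k
    have hrA : (0:ℝ) ≤ (a + k) * (b₁ + k) / ((a + b₁ + 1 + k) * (k + 1)) := by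
      apply div_nonneg (by nlinarith) (by nlinarith)
    have hratio := (ratio_lt ha hb₁ h12 k).le
    rw [hypTerm_succ ha hb₁, hypTerm_succ ha hb₂]
    calc hypTerm a b₁ k * ((a + k) * (b₁ + k) / ((a + b₁ + 1 + k) * (k + 1))) * hypTerm a b₂ m
        = (hypTerm a b₁ k * hypTerm a b₂ m) * ((a + k) * (b₁ + k) / ((a + b₁ + 1 + k) * (k + 1))) := by ring
      _ ≤ (hypTerm a b₁ m * hypTerm a b₂ k) * ((a + k) * (b₁ + k) / ((a + b₁ + 1 + k) * (k + 1))) :=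
          mul_le_mul_of_nonneg_right ih hrA
      _ ≤ (hypTerm a b₁ m * hypTerm a b₂ k) * ((a + k) * (b₂ + k) / ((a + b₂ + 1 + k) * (k + 1))) :=
          mul_le_mul_of_nonneg_left hratio (by nlinarith)
      _ = hypTerm a b₁ m * (hypTerm a b₂ k * ((a + k) * (b₂ + k) / ((a + b₂ + 1 + k) * (k + 1)))) := by ring

lemma pow_cross {x y : ℝ} (hx : 0 ≤ x) (hxy : x ≤ y) {m n : ℕ} (hmn : m ≤ n) :
    y ^ m * x ^ n ≤ x ^ m * y ^ n := by
  obtain ⟨k, rfl⟩ := Nat.exists_eq_add_of_le hmn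
  have hy : 0 ≤ y := hx.trans hxy
  have hk : x ^ k ≤ y ^ k := pow_le_pow_left₀ hx hxy k
  calc y ^ m * x ^ (m + k) = (x ^ m * y ^ m) * x ^ k := by rw [pow_add]; ring
    _ ≤ (x ^ m * y ^ m) * y ^ k := by
        apply mul_le_mul_of_nonneg_left hk (by positivity)
    _ = x ^ m * y ^ (m + k) := by rw [pow_add]; ring

end Mono

theorem stmt13 (a b₁ b₂ : ℝ) (ha : 0 < a) (hb₁ : 0 < b₁) (hb₂ : b₁ < b₂) :
    StrictAntiOn
      (fun r : ℝ => hyp a b₁ (a + b₁ + 1) r / hyp a b₂ (a + b₂ + 1) r)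
      (Set.Icc 0 1) ∧
    hyp a b₁ (a + b₁ + 1) 0 / hyp a b₂ (a + b₂ + 1) 0 = 1 ∧
    hyp a b₁ (a + b₁ + 1) 1 / hyp a b₂ (a + b₂ + 1) 1 =
      Real.Gamma (b₂ + 1) * Real.Gamma (a + b₁ + 1) /
        (Real.Gamma (b₁ + 1) * Real.Gamma (a + b₂ + 1)) := by
  have hb₂' : 0 < b₂ := hb₁.trans hb₂
  set A : ℕ → ℝ := hypTerm a b₁ with hA
  set B : ℕ → ℝ := hypTerm a b₂ with hB
  have hApos : ∀ n, 0 < A n := hypTerm_pos ha hb₁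
  have hBpos : ∀ n, 0 < B n := hypTerm_pos ha hb₂'
  have G1 := gauss_hasSum ha hb₁
  have G2 := gauss_hasSum ha hb₂'
  have SA : Summable A := G1.summable
  have SB : Summable B := G2.summable
  have hhyp1 : ∀ x : ℝ, hyp a b₁ (a + b₁ + 1) x = ∑' n, A n * x ^ n := fun x => rfl
  have hhyp2 : ∀ x : ℝ, hyp a b₂ (a + b₂ + 1) x = ∑' n, B n * x ^ n := fun x => rfl
  -- summability on [0,1]
  have SAx : ∀ x ∈ Icc (0:ℝ) 1, Summable (fun n => A n * x ^ n) := by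
    intro x hx
    apply SA.of_nonneg_of_le (fun n => mul_nonneg (hApos n).le (pow_nonneg hx.1 n))
    intro n
    calc A n * x ^ n ≤ A n * 1 := by
          apply mul_le_mul_of_nonneg_left _ (hApos n).le
          exact pow_le_one₀ hx.1 hx.2
      _ = A n := mul_one _
  have SBx : ∀ x ∈ Icc (0:ℝ) 1, Summable (fun n => B n * x ^ n) := by
    intro x hx
    apply SB.of_nonneg_of_le (fun n => mul_nonneg (hBpos n).le (pow_nonneg hx.1 n))
    intro n
    calc B n * x ^ n ≤ B n * 1 := by
          apply mul_le_mul_of_nonneg_left _ (hBpos n).le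
          exact pow_le_one₀ hx.1 hx.2
      _ = B n := mul_one _
  have hyp2_pos : ∀ x ∈ Icc (0:ℝ) 1, 0 < hyp a b₂ (a + b₂ + 1) x := by
    intro x hx
    rw [hhyp2]
    have h0 : (0:ℝ) < B 0 * x ^ 0 := by simpa using hBpos 0
    calc (0:ℝ) < B 0 * x ^ 0 := h0
      _ ≤ ∑' n, B n * x ^ n := Summable.le_tsum (SBx x hx) 0 (fun j _ => mul_nonneg (hBpos j).le (pow_nonneg hx.1 j))
  refine ⟨?_, ?_, ?_⟩
  · -- strict anti
    intro x hx y hy hxy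
    simp only
    rw [div_lt_div_iff₀ (hyp2_pos y hy) (hyp2_pos x hx)]
    rw [hhyp1, hhyp1, hhyp2, hhyp2]
    set Ax : ℕ → ℝ := fun n => A n * x ^ n
    set Ay : ℕ → ℝ := fun n => A n * y ^ n
    set Bx : ℕ → ℝ := fun n => B n * x ^ n
    set By : ℕ → ℝ := fun n => B n * y ^ n
    have SAx' := SAx x hx; have SAy' := SAx y hy
    have SBx' := SBx x hx; have SBy' := SBx y hy
    have hxnn : (0:ℝ) ≤ x := hx.1
    have hynn : (0:ℝ) ≤ y := hy.1
    have SF : Summable (fun p : ℕ × ℕ => Ax p.1 * By p.2) :=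
      SAx'.mul_of_nonneg SBy' (fun n => mul_nonneg (hApos n).le (pow_nonneg hxnn n))
        (fun n => mul_nonneg (hBpos n).le (pow_nonneg hynn n))
    have SG : Summable (fun p : ℕ × ℕ => Ay p.1 * Bx p.2) :=
      SAy'.mul_of_nonneg SBx' (fun n => mul_nonneg (hApos n).le (pow_nonneg hynn n))
        (fun n => mul_nonneg (hBpos n).le (pow_nonneg hxnn n))
    have hFv : (∑' n, Ay n) * (∑' n, Bx n) = ∑' p : ℕ × ℕ, Ay p.1 * Bx p.2 :=
      SAy'.tsum_mul_tsum SBx' SG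
    have hGv : (∑' n, Ax n) * (∑' n, By n) = ∑' p : ℕ × ℕ, Ax p.1 * By p.2 :=
      SAx'.tsum_mul_tsum SBy' SF
    rw [hFv, hGv]
    set T : ℕ × ℕ → ℝ := fun p => Ax p.1 * By p.2 - Ay p.1 * Bx p.2 with hT
    have ST : Summable T := SF.sub SG
    have hdiff : (∑' p : ℕ × ℕ, Ax p.1 * By p.2) - (∑' p : ℕ × ℕ, Ay p.1 * Bx p.2)
        = ∑' p, T p := (SF.tsum_sub SG).symm
    -- symmetrization
    set e : ℕ × ℕ ≃ ℕ × ℕ := Equiv.prodComm ℕ ℕ with he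
    have STe : Summable (fun p => T (e p)) := e.summable_iff.2 ST
    have hTe : (∑' p, T (e p)) = ∑' p, T p := e.tsum_eq T
    set S : ℕ × ℕ → ℝ := fun p =>
      (A p.1 * B p.2 - A p.2 * B p.1) * (x ^ p.1 * y ^ p.2 - y ^ p.1 * x ^ p.2) with hS
    have hTS : ∀ p : ℕ × ℕ, T p + T (e p) = S p := by
      intro p
      simp only [hT, hS, he, Equiv.prodComm_apply, Prod.fst_swap, Prod.snd_swap]
      ring
    have hSsum : Summable S := (ST.add STe).congr hTS
    have hSnonneg : ∀ p : ℕ × ℕ, 0 ≤ S p := by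
      intro ⟨m, n⟩
      show 0 ≤ (A m * B n - A n * B m) * (x ^ m * y ^ n - y ^ m * x ^ n)
      rcases le_total m n with hmn | hnm
      · apply mul_nonneg
        · have := cross_le ha hb₁ hb₂ hmn
          linarith [this]
        · have := pow_cross hxnn hxy.le hmn
          linarith [this]
      · have h1 : A m * B n - A n * B m ≤ 0 := by
          have := cross_le ha hb₁ hb₂ hnm
          linarith [this]
        have h2 : x ^ m * y ^ n - y ^ m * x ^ n ≤ 0 := by
          have := pow_cross hxnn hxy.le hnm
          linarith [this]
        rw [← neg_mul_neg]
        exact mul_nonneg (neg_nonneg.2 h1) (neg_nonneg.2 h2)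
    have hS01 : 0 < S (0, 1) := by
      have hA0 : A 0 = 1 := hypTerm_zero a b₁
      have hB0 : B 0 = 1 := hypTerm_zero a b₂
      have hA1 : A 1 = 1 * ((a + 0) * (b₁ + 0) / ((a + b₁ + 1 + 0) * (0 + 1))) := by
        rw [hA, hypTerm_succ ha hb₁, hypTerm_zero]
        norm_num
      have hB1 : B 1 = 1 * ((a + 0) * (b₂ + 0) / ((a + b₂ + 1 + 0) * (0 + 1))) := by
        rw [hB, hypTerm_succ ha hb₂', hypTerm_zero]
        norm_num
      have hr := ratio_lt ha hb₁ hb₂ 0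
      have hfact : A 1 < B 1 := by
        rw [hA1, hB1]
        push_cast at hr ⊢
        linarith [hr]
      show 0 < (A 0 * B 1 - A 1 * B 0) * (x ^ 0 * y ^ 1 - y ^ 0 * x ^ 1)
      rw [hA0, hB0]
      simp only [pow_zero, pow_one, one_mul, mul_one]
      exact mul_pos (by linarith) (by linarith)
    have hpos : 0 < ∑' p, S p := hSsum.tsum_pos hSnonneg (0, 1) hS01
    have h2T : (∑' p, T p) + (∑' p, T p) = ∑' p, S p := by
      nth_rewrite 1 [← hTe]
      rw [← STe.tsum_add ST]
      apply tsum_congr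
      intro p
      rw [← hTS p]
      ring
    linarith [hdiff, h2T, hpos]
  · rw [hyp_zero_val, hyp_zero_val]
    norm_num
  · have h1v : hyp a b₁ (a + b₁ + 1) 1
        = Real.Gamma (a + b₁ + 1) / (Real.Gamma (a + 1) * Real.Gamma (b₁ + 1)) := by
      rw [hhyp1 1]
      rw [tsum_congr (fun n => by rw [one_pow, mul_one])]
      exact G1.tsum_eq
    have h2v : hyp a b₂ (a + b₂ + 1) 1
        = Real.Gamma (a + b₂ + 1) / (Real.Gamma (a + 1) * Real.Gamma (b₂ + 1)) := by
      rw [hhyp2 1]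
      rw [tsum_congr (fun n => by rw [one_pow, mul_one])]
      exact G2.tsum_eq
    rw [h1v, h2v]
    have g1 := (Real.Gamma_pos_of_pos (show (0:ℝ) < a + 1 by linarith)).ne'
    have g2 := (Real.Gamma_pos_of_pos (show (0:ℝ) < b₁ + 1 by linarith)).ne'
    have g3 := (Real.Gamma_pos_of_pos (show (0:ℝ) < b₂ + 1 by linarith)).ne'
    have g4 := (Real.Gamma_pos_of_pos (show (0:ℝ) < a + b₁ + 1 by linarith)).ne'
    have g5 := (Real.Gamma_pos_of_pos (show (0:ℝ) < a + b₂ + 1 by linarith)).ne'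
    field_simp
end Binomial
end
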